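/- arXiv:0905.3256 — 3 statements merged into one kernel-verified Lean document; each statement's English description precedes it below -/
import Mathlib

section
/- For every nonnegative integer a and real γ > 0, ∫_0^{2π}∫_0^{2π} |e^{iφ_1} − e^{iφ_2}|^2 exp(γ(e^{iφ_1}+e^{iφ_2})) e^{−ia(φ_1+φ_2)} dφ_1 dφ_2 / (2π)^2 = γ^{2a} · 2 / (a!·(a+1)!). -/
/-!
Since `|e^{iφ₁} - e^{iφ₂}|² = 2 - e^{iφ₁}e^{-iφ₂} - e^{-iφ₁}e^{iφ₂}`, the integrand is a combination
of three products of the one-variable functions `exp (γ e^{iφ}) e^{-inφ}`, `n ∈ {a - 1, a, a + 1}`,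
so the double integral factors. Expanding `exp (γ e^{iφ})` in its power series and integrating
termwise, only one Fourier mode survives: `(2π)⁻¹ ∫ exp (γ e^{iφ}) e^{-inφ} dφ = γⁿ / n!`, and `0`
for `n < 0`. The integral is thus `2 (c_a² - c_{a-1} c_{a+1})` with `c_n = γⁿ / n!`, and
`1 / a!² - 1 / ((a - 1)! (a + 1)!) = 1 / (a! (a + 1)!)`.
-/

open Complex intervalIntegral
open MeasureTheory (volume)
open scoped Nat Real

noncomputable def expCoeff (z : ℂ) : ℤ → ℂ
  | (n : ℕ) => z ^ n / n !
  | Int.negSucc _ => 0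

noncomputable def expFourierIntegrand (z : ℂ) (n : ℤ) (θ : ℝ) : ℂ :=
  exp (z * exp (I * θ)) * exp (-(n * (I * θ)))

lemma integral_exp_int_mul_I (j : ℤ) :
    ∫ θ in (0 : ℝ)..2 * π, exp (j * (I * θ)) = if j = 0 then ((2 * π : ℝ) : ℂ) else 0 := by
  split_ifs with hj
  · simp [hj]
  · have hc : (j : ℂ) * I ≠ 0 := by simp [hj, I_ne_zero]
    simp_rw [← mul_assoc]
    rw [integral_exp_mul_complex hc, show (j : ℂ) * I * ((2 * π : ℝ) : ℂ) = j * (2 * π * I) by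
      push_cast; ring, exp_int_mul_two_pi_mul_I]
    simp

lemma hasSum_expFourierIntegrand (z : ℂ) (n : ℤ) (θ : ℝ) :
    HasSum (fun k : ℕ => z ^ k / k ! * exp (((k - n : ℤ) : ℂ) * (I * θ)))
      (expFourierIntegrand z n θ) := by
  have h := (NormedSpace.expSeries_div_hasSum_exp (z * exp (I * θ))).mul_right
    (exp (-(n * (I * θ))))
  rw [← exp_eq_exp_ℂ] at h
  refine h.congr_fun fun k => ?_
  rw [mul_pow, ← exp_nat_mul, mul_div_right_comm, mul_assoc, ← exp_add]
  push_cast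
  ring_nf

lemma continuous_expFourierIntegrand (z : ℂ) (n : ℤ) : Continuous (expFourierIntegrand z n) := by
  unfold expFourierIntegrand
  fun_prop

lemma integral_expFourierIntegrand (z : ℂ) (n : ℤ) :
    ∫ θ in (0 : ℝ)..2 * π, expFourierIntegrand z n θ = ((2 * π : ℝ) : ℂ) * expCoeff z n := by
  have hsum := hasSum_integral_of_dominated_convergence (μ := volume)
    (a := 0) (b := 2 * π) (fun k _ => ‖z‖ ^ k / k !)
    (fun k => by fun_prop)
    (fun k => .of_forall fun θ _ => by simp [norm_exp])
    (.of_forall fun _ _ => Real.summable_pow_div_factorial _)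
    intervalIntegrable_const
    (.of_forall fun θ _ => hasSum_expFourierIntegrand z n θ)
  simp_rw [integral_const_mul, integral_exp_int_mul_I, sub_eq_zero] at hsum
  rw [← hsum.tsum_eq]
  cases n with
  | ofNat m =>
    rw [tsum_eq_single m fun k hk => by simp [hk]]
    simp [expCoeff, mul_comm]
  | negSucc m => simp [expCoeff]

lemma ofReal_sq_norm_exp_I_sub_exp_I (θ₁ θ₂ : ℝ) :
    ((‖exp (I * θ₁) - exp (I * θ₂)‖ ^ 2 : ℝ) : ℂ) =
      2 - exp (I * θ₁) * exp (-(I * θ₂)) - exp (-(I * θ₁)) * exp (I * θ₂) := by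
  rw [ofReal_pow, ← mul_conj', map_sub, ← exp_conj, ← exp_conj]
  simp only [map_mul, conj_I, conj_ofReal, neg_mul, mul_sub, sub_mul, ← exp_add]
  ring_nf
  simp

lemma ofReal_sq_norm_exp_I_sub_exp_I_mul (z : ℂ) (a : ℤ) (θ₁ θ₂ : ℝ) :
    ((‖exp (I * θ₁) - exp (I * θ₂)‖ ^ 2 : ℝ) : ℂ) * exp (z * (exp (I * θ₁) + exp (I * θ₂))) *
        exp (-I * a * (θ₁ + θ₂)) =
      2 * expFourierIntegrand z a θ₁ * expFourierIntegrand z a θ₂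
        - expFourierIntegrand z (a - 1) θ₁ * expFourierIntegrand z (a + 1) θ₂
        - expFourierIntegrand z (a + 1) θ₁ * expFourierIntegrand z (a - 1) θ₂ := by
  have h : exp (-I * a * (θ₁ + θ₂)) = exp (-(a * (I * θ₁))) * exp (-(a * (I * θ₂))) := by
    rw [← exp_add]
    ring_nf
  rw [h, ofReal_sq_norm_exp_I_sub_exp_I, mul_add, exp_add]
  unfold expFourierIntegrand
  push_cast
  simp only [add_mul, sub_mul, one_mul, neg_add, neg_sub, exp_add, exp_sub, exp_neg]
  ring

lemma integral_integral_two_mul_sub_mul_sub_mul {f g h : ℝ → ℂ} {a b : ℝ}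
    (hf : IntervalIntegrable f volume a b)
    (hg : IntervalIntegrable g volume a b)
    (hh : IntervalIntegrable h volume a b) :
    ∫ x in a..b, ∫ y in a..b, (2 * f x * f y - g x * h y - h x * g y) =
      2 * ((∫ x in a..b, f x) ^ 2 - (∫ x in a..b, g x) * ∫ x in a..b, h x) := by
  have hf2 := hf.const_mul 2
  calc _ = ∫ x in a..b, (2 * f x * (∫ y in a..b, f y) - g x * (∫ y in a..b, h y)
        - h x * ∫ y in a..b, g y) := by
        refine integral_congr fun x _ => ?_
        rw [integral_sub ((hf.const_mul _).sub (hh.const_mul _)) (hg.const_mul _),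
          integral_sub (hf.const_mul _) (hh.const_mul _)]
        simp only [integral_const_mul]
    _ = _ := by
        rw [integral_sub ((hf2.mul_const _).sub (hg.mul_const _)) (hh.mul_const _),
          integral_sub (hf2.mul_const _) (hg.mul_const _)]
        simp only [integral_mul_const, integral_const_mul]
        ring

lemma expCoeff_sq_sub_mul (z : ℂ) (a : ℕ) :
    expCoeff z a ^ 2 - expCoeff z (a - 1) * expCoeff z (a + 1) =
      z ^ (2 * a) / (a ! * (a + 1)!) := by
  cases a with
  | zero =>
    rw [show ((0 : ℕ) : ℤ) - 1 = Int.negSucc 0 from rfl]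
    simp [expCoeff]
  | succ b =>
    rw [show ((b + 1 : ℕ) : ℤ) - 1 = b by push_cast; ring,
      show ((b + 1 : ℕ) : ℤ) + 1 = (b + 2 : ℕ) by push_cast; ring]
    simp only [expCoeff, Nat.factorial_succ]
    have hb : (b + 1 + 1 : ℂ) ≠ 0 := by exact_mod_cast Nat.succ_ne_zero (b + 1)
    push_cast
    field_simp
    ring

theorem circular_selberg_d2_general (a : ℕ) (γ : ℝ) :
    (∫ φ1 in (0:ℝ)..(2 * Real.pi), ∫ φ2 in (0:ℝ)..(2 * Real.pi),
        ((‖Complex.exp (Complex.I * φ1) - Complex.exp (Complex.I * φ2)‖ ^ 2 : ℝ) : ℂ) *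
          Complex.exp ((γ : ℂ) * (Complex.exp (Complex.I * φ1) + Complex.exp (Complex.I * φ2))) *
          Complex.exp (-Complex.I * (a : ℂ) * ((φ1 : ℂ) + (φ2 : ℂ)))) / ((2 * Real.pi : ℝ) : ℂ) ^ 2 =
      (γ : ℂ) ^ (2 * a) * 2 / ((a.factorial : ℂ) * ((a + 1).factorial : ℂ)) := by
  have hint (n : ℤ) : IntervalIntegrable (expFourierIntegrand γ n) volume 0 (2 * π) :=
    (continuous_expFourierIntegrand γ n).intervalIntegrable _ _
  have h2π : ((2 * π : ℝ) : ℂ) ≠ 0 := by exact_mod_cast Real.two_pi_pos.ne'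
  simp_rw [← Int.cast_natCast (R := ℂ) a, ofReal_sq_norm_exp_I_sub_exp_I_mul]
  rw [integral_integral_two_mul_sub_mul_sub_mul (hint _) (hint _) (hint _)]
  simp only [integral_expFourierIntegrand]
  rw [mul_div_right_comm _ (2 : ℂ), ← expCoeff_sq_sub_mul]
  field_simp

theorem circular_selberg_d2 (a : ℕ) (γ : ℝ) (hγ : 0 < γ) :
    (∫ φ1 in (0:ℝ)..(2 * Real.pi), ∫ φ2 in (0:ℝ)..(2 * Real.pi),
        ((‖Complex.exp (Complex.I * φ1) - Complex.exp (Complex.I * φ2)‖ ^ 2 : ℝ) : ℂ) *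
          Complex.exp ((γ : ℂ) * (Complex.exp (Complex.I * φ1) + Complex.exp (Complex.I * φ2))) *
          Complex.exp (-Complex.I * (a : ℂ) * ((φ1 : ℂ) + (φ2 : ℂ)))) / ((2 * Real.pi : ℝ) : ℂ) ^ 2 =
      (γ : ℂ) ^ (2 * a) * 2 / ((a.factorial : ℂ) * ((a + 1).factorial : ℂ)) :=
  circular_selberg_d2_general a γ
end

section
/- Iterated Gaussian identity: for an a-tuple of vectors v_1,…,v_a ∈ ℂ^c forming the c×a matrix V, and σ = h + iε·1_c with h Hermitian, ε > 0, one has ∫_{ℂ^{ca}} exp(i tr(V V† σ)) d[V] = π^{ca} det(−iσ)^{−a}, where d[V] is Lebesgue measure on the real and imaginary parts of all entries of V. -/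
open Matrix

/-!
Diagonalize `h = U Λ U*` with `U` unitary. The substitution `V ↦ U V` preserves Lebesgue measure,
since as a real linear map it has determinant `|det U| ^ (2 a) = 1`. After it, the integrand
factorizes into `c a` one-dimensional complex Gaussians
`∫ exp (-(ε - i λ_k) |z|²) dz = π / (ε - i λ_k)`, and `∏_k (ε - i λ_k) = det (-i σ)`.
-/

open MeasureTheory Complex

theorem Complex.integral_cexp_neg_mul_norm_sq {b : ℂ} (hb : 0 < b.re) :
    ∫ z : ℂ, cexp (-b * (‖z‖ : ℂ) ^ 2) = Real.pi / b := by
  simpa using GaussianFourier.integral_cexp_neg_mul_sq_norm (V := ℂ) hb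

theorem LinearMap.integral_comp_of_norm_det_eq_one {E F : Type*} [NormedAddCommGroup E]
    [NormedSpace ℂ E] [FiniteDimensional ℂ E] [MeasurableSpace E] [BorelSpace E]
    [NormedAddCommGroup F] [NormedSpace ℝ F] (μ : Measure E) [μ.IsAddHaarMeasure]
    (f : E →ₗ[ℂ] E) (hf : ‖LinearMap.det f‖ = 1) (g : E → F) :
    ∫ x, g (f x) ∂μ = ∫ x, g x ∂μ := by
  have hdet : LinearMap.det (f.restrictScalars ℝ) = 1 := by
    rw [LinearMap.det_restrictScalars, Algebra.norm_complex_apply, Complex.normSq_eq_norm_sq,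
      hf, one_pow]
  have hmp : MeasurePreserving f μ μ :=
    ⟨f.continuous_of_finiteDimensional.measurable, by
      simpa [hdet] using Measure.map_linearMap_addHaar_eq_smul_addHaar μ
        (f := f.restrictScalars ℝ) (by simp [hdet])⟩
  have hdet_ne : LinearMap.det f ≠ 0 := by
    rintro h
    simp [h] at hf
  exact hmp.integral_comp
    (f.equivOfDetNeZero hdet_ne).toContinuousLinearEquiv.toHomeomorph.measurableEmbedding g

theorem integral_cexp_neg_sum_sum_mul_norm_sq {m n : Type*} [Fintype m] [Fintype n]
    (b : m → ℂ) (hb : ∀ k, 0 < (b k).re) :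
    ∫ W : m → n → ℂ, cexp (-∑ k, ∑ l, b k * (‖W k l‖ : ℂ) ^ 2) =
      ∏ k, (Real.pi / b k) ^ Fintype.card n := by
  simp_rw [← Finset.sum_neg_distrib, Complex.exp_sum, ← neg_mul]
  rw [integral_fintype_prod_volume_eq_prod
    (f := fun k (w : n → ℂ) => ∏ l, cexp (-b k * (‖w l‖ : ℂ) ^ 2))]
  refine Finset.prod_congr rfl fun k _ => ?_
  rw [integral_fintype_prod_volume_eq_pow (fun z : ℂ => cexp (-b k * (‖z‖ : ℂ) ^ 2)),
    Complex.integral_cexp_neg_mul_norm_sq (hb k)]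

namespace Matrix

variable {m n : Type*} [Fintype m] [DecidableEq m] [Fintype n]

theorem det_mulLeftLinearMap {R : Type*} [CommRing R] (A : Matrix m m R) :
    LinearMap.det (mulLeftLinearMap n R A) = A.det ^ Fintype.card n := by
  let T : Matrix m n R ≃ₗ[R] (n → m → R) :=
    (transposeLinearEquiv m n R R).trans (ofLinearEquiv R).symm
  -- in the transposed picture, `A` acts separately on each column
  have hT : T.toLinearMap ∘ₗ mulLeftLinearMap n R A ∘ₗ T.symm.toLinearMap =
      LinearMap.pi fun i => (toLin' A).comp (LinearMap.proj i) := by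
    ext W i j
    simp [T, ofLinearEquiv, Matrix.mul_apply, mulVec, dotProduct, mul_comm]
  rw [← LinearMap.det_conj _ T, hT, LinearMap.det_pi, LinearMap.det_toLin', Finset.prod_const,
    Finset.card_univ]

theorem integral_comp_unitary_mul {E : Type*} [NormedAddCommGroup E] [NormedSpace ℝ E]
    {U : Matrix m m ℂ} (hU : U ∈ unitaryGroup m ℂ) (F : (m → n → ℂ) → E) :
    ∫ V : m → n → ℂ, F (U * of V) = ∫ V, F V := by
  have hUdet : ‖U.det‖ = 1 := CStarRing.norm_of_mem_unitary (det_of_mem_unitary hU)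
  have hdet : ‖LinearMap.det (mulLeftLinearMap n ℂ U)‖ = 1 := by
    rw [det_mulLeftLinearMap, norm_pow, hUdet, one_pow]
  -- not found by instance search for the nested product
  have : (volume : Measure (m → n → ℂ)).IsAddHaarMeasure := Measure.pi.isAddHaarMeasure _
  exact LinearMap.integral_comp_of_norm_det_eq_one volume _ hdet F

theorem trace_mul_conjTranspose_mul_diagonal (W : m → n → ℂ) (b : m → ℂ) :
    trace (of W * (of W)ᴴ * diagonal b) = ∑ k, ∑ l, b k * (‖W k l‖ : ℂ) ^ 2 := by
  simp only [trace, diag_apply, mul_diagonal]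
  simp only [mul_apply, conjTranspose_apply, of_apply, RCLike.star_def, Complex.mul_conj',
    Finset.mul_sum, mul_comm]

theorem integral_cexp_neg_trace_mul_conjTranspose_mul {U : Matrix m m ℂ}
    (hU : U ∈ unitaryGroup m ℂ) (b : m → ℂ) (hb : ∀ k, 0 < (b k).re) {A : Matrix m m ℂ}
    (hA : A = U * diagonal b * star U) :
    ∫ V : m → n → ℂ, cexp (-trace (of V * (of V)ᴴ * A)) =
      (Real.pi : ℂ) ^ (Fintype.card m * Fintype.card n) * A.det⁻¹ ^ Fintype.card n := by
  have hUU : star U * U = 1 := mem_unitaryGroup_iff'.mp hU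
  have hconj (W : m → n → ℂ) : trace (of (U * of W) * (of (U * of W))ᴴ * A) =
      trace (of W * (of W)ᴴ * diagonal b) := by
    show trace (U * of W * (U * of W)ᴴ * A) = _
    calc _ = trace (U * (of W * (of W)ᴴ * (star U * U) * diagonal b) * star U) := by
          simp only [hA, conjTranspose_mul, star_eq_conjTranspose, Matrix.mul_assoc]
      _ = _ := by
          rw [hUU, Matrix.mul_one, trace_mul_comm, ← Matrix.mul_assoc, hUU, Matrix.one_mul]
  have hdet : A.det = ∏ k, b k := by
    rw [hA, det_mul, det_mul, det_diagonal, mul_comm, ← mul_assoc, ← det_mul, hUU, det_one,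
      one_mul]
  rw [← integral_comp_unitary_mul hU]
  simp_rw [hconj, trace_mul_conjTranspose_mul_diagonal]
  rw [integral_cexp_neg_sum_sum_mul_norm_sq b hb, hdet, Finset.prod_pow, Finset.prod_div_distrib,
    Finset.prod_const, Finset.card_univ, div_pow, ← pow_mul, div_eq_mul_inv, inv_pow]

theorem IsHermitian.neg_I_smul_add_I_mul_smul_one_eq {h : Matrix m m ℂ} (hh : h.IsHermitian)
    (ε : ℝ) :
    (-I) • (h + (I * ε) • 1) =
      (hh.eigenvectorUnitary : Matrix m m ℂ) * diagonal (fun k => ε - I * hh.eigenvalues k) *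
        star (hh.eigenvectorUnitary : Matrix m m ℂ) := by
  set U := hh.eigenvectorUnitary
  have hUU : (U : Matrix m m ℂ) * star (U : Matrix m m ℂ) = 1 := mem_unitaryGroup_iff.mp U.2
  have hdiag : diagonal (fun k => (ε : ℂ) - I * hh.eigenvalues k) =
      (-I) • (diagonal (RCLike.ofReal ∘ hh.eigenvalues) + (I * ε) • 1) := by
    ext i j
    rcases eq_or_ne i j with rfl | hij
    · simp only [diagonal_apply_eq, smul_apply, add_apply, one_apply_eq, Function.comp_apply,
        RCLike.ofReal_eq_complex_ofReal, smul_eq_mul, mul_one]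
      linear_combination (ε : ℂ) * I_sq
    · simp [hij]
  conv_lhs => rw [hh.spectral_theorem, Unitary.conjStarAlgAut_apply, ← hUU]
  rw [hdiag, Matrix.mul_smul, Matrix.smul_mul, Matrix.mul_add, Matrix.add_mul, Matrix.mul_smul,
    Matrix.smul_mul, Matrix.mul_one]

end Matrix

theorem gaussian_matrix_integral (c a : ℕ) (h : Matrix (Fin c) (Fin c) ℂ)
    (hh : h.IsHermitian) (ε : ℝ) (hε : 0 < ε)
    (σ : Matrix (Fin c) (Fin c) ℂ) (hσ : σ = h + (Complex.I * (ε : ℂ)) • 1) :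
    ∫ V : Fin c → Fin a → ℂ,
        Complex.exp (Complex.I * Matrix.trace (Matrix.of V * (Matrix.of V)ᴴ * σ)) =
      ((Real.pi : ℂ)) ^ (c * a) * ((Matrix.det ((-Complex.I) • σ))⁻¹) ^ a := by
  have hb (k : Fin c) : 0 < ((ε : ℂ) - I * hh.eigenvalues k).re := by simpa using hε
  have hI (V : Fin c → Fin a → ℂ) :
      I * trace (of V * (of V)ᴴ * σ) = -trace (of V * (of V)ᴴ * ((-I) • σ)) := by
    rw [Matrix.mul_smul, trace_smul, smul_eq_mul]
    ring
  simp_rw [hI]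
  rw [integral_cexp_neg_trace_mul_conjTranspose_mul hh.eigenvectorUnitary.2 _ hb
    (hσ ▸ hh.neg_I_smul_add_I_mul_smul_one_eq ε), Fintype.card_fin, Fintype.card_fin]
end

section
/- Two-dimensional residue-type identity: for an entire symmetric function F: ℂ² → ℂ with Taylor expansion F(z_1,z_2) = Σ c_{m,n} z_1^m z_2^n (symmetric: c_{m,n} = c_{n,m}), and integers a ≥ c ≥ 0 with κ = a − c + 2, one has ∫_{[0,2π]^2} F(e^{iφ_1}, e^{iφ_2}) (e^{iφ_1} − e^{iφ_2})(e^{−iφ_1} − e^{−iφ_2}) e^{i(1−κ)(φ_1+φ_2)} dφ_1 dφ_2/(2π)^2 = 2(c_{κ−1,κ−1} − c_{κ,κ−2}). -/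
open MeasureTheory Complex intervalIntegral

noncomputable def Eexp (k : ℤ) (φ : ℝ) : ℂ := Complex.exp (Complex.I * k * φ)

@[fun_prop]
lemma Eexp_cont (k : ℤ) : Continuous (Eexp k) := by
  unfold Eexp; fun_prop

lemma Eexp_norm (k : ℤ) (φ : ℝ) : ‖Eexp k φ‖ = 1 := by
  unfold Eexp
  rw [Complex.norm_exp]
  simp [Complex.mul_re]

noncomputable def Jc (k : ℤ) : ℂ := if k = 0 then (2*Real.pi : ℂ) else 0

lemma Jc_norm (k : ℤ) : ‖Jc k‖ ≤ 2*Real.pi := by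
  unfold Jc
  split_ifs
  · rw [show (2*Real.pi : ℂ) = ((2*Real.pi : ℝ) : ℂ) by push_cast; ring]
    rw [Complex.norm_real, Real.norm_of_nonneg (by positivity)]
  · simp; positivity

lemma Eexp_integral (k : ℤ) :
    (∫ φ in (0:ℝ)..(2*Real.pi), Eexp k φ) = Jc k := by
  unfold Eexp Jc
  split_ifs with h
  · subst h; simp
  · have hc : (Complex.I * k) ≠ 0 := by
      simp [Complex.I_ne_zero, Complex.ext_iff]
      exact_mod_cast h
    have := integral_exp_mul_complex (a := 0) (b := 2*Real.pi) hc
    simp only [mul_assoc] at this ⊢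
    push_cast at this
    rw [this]
    have h1 : Complex.exp (Complex.I * ((k:ℂ) * (2*(Real.pi:ℂ)))) = 1 := by
      rw [show Complex.I * ((k:ℂ) * (2*(Real.pi:ℂ))) = (k:ℤ) * (2 * Real.pi * Complex.I) by push_cast; ring]
      exact Complex.exp_int_mul_two_pi_mul_I k
    simp [h1]

lemma Eexp_zpow (k : ℤ) (φ : ℝ) : Eexp k φ = Complex.exp (Complex.I * φ) ^ k := by
  unfold Eexp; rw [← Complex.exp_int_mul]; ring_nf

lemma zpow_identity (u v : ℂ) (hu : u ≠ 0) (hv : v ≠ 0) (m n κ : ℕ) :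
    u ^ m * v ^ n * ((u - v) * ((u⁻¹ - v⁻¹) * (u ^ ((1:ℤ) - κ) * v ^ ((1:ℤ) - κ)))) =
      2 * u ^ ((m:ℤ) + 1 - κ) * v ^ ((n:ℤ) + 1 - κ)
        - u ^ ((m:ℤ) + 2 - κ) * v ^ ((n:ℤ) - κ)
        - u ^ ((m:ℤ) - κ) * v ^ ((n:ℤ) + 2 - κ) := by
  simp only [zpow_sub₀ hu, zpow_sub₀ hv, zpow_add₀ hu, zpow_add₀ hv,
    zpow_natCast, zpow_one, zpow_two]
  field_simp
  ring

lemma pointwise_expand (m n κ : ℕ) (φ1 φ2 : ℝ) :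
    Complex.exp (Complex.I * φ1) ^ m * Complex.exp (Complex.I * φ2) ^ n *
      ((Complex.exp (Complex.I * φ1) - Complex.exp (Complex.I * φ2)) *
        ((Complex.exp (-Complex.I * φ1) - Complex.exp (-Complex.I * φ2)) *
          Complex.exp (Complex.I * (1 - (κ : ℂ)) * ((φ1 : ℂ) + (φ2 : ℂ))))) =
      2 * Eexp ((m:ℤ) + 1 - κ) φ1 * Eexp ((n:ℤ) + 1 - κ) φ2
        - Eexp ((m:ℤ) + 2 - κ) φ1 * Eexp ((n:ℤ) - κ) φ2
        - Eexp ((m:ℤ) - κ) φ1 * Eexp ((n:ℤ) + 2 - κ) φ2 := by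
  have hu : Complex.exp (Complex.I * φ1) ≠ 0 := Complex.exp_ne_zero _
  have hv : Complex.exp (Complex.I * φ2) ≠ 0 := Complex.exp_ne_zero _
  have h1 : Complex.exp (-Complex.I * φ1) = (Complex.exp (Complex.I * φ1))⁻¹ := by
    rw [← Complex.exp_neg]; ring_nf
  have h2 : Complex.exp (-Complex.I * φ2) = (Complex.exp (Complex.I * φ2))⁻¹ := by
    rw [← Complex.exp_neg]; ring_nf
  have h3 : Complex.exp (Complex.I * (1 - (κ : ℂ)) * ((φ1 : ℂ) + (φ2 : ℂ))) =
      Complex.exp (Complex.I * φ1) ^ ((1:ℤ) - κ) * Complex.exp (Complex.I * φ2) ^ ((1:ℤ) - κ) := by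
    rw [← Eexp_zpow, ← Eexp_zpow]
    unfold Eexp
    rw [← Complex.exp_add]
    push_cast
    ring_nf
  rw [h1, h2, h3, Eexp_zpow, Eexp_zpow, Eexp_zpow, Eexp_zpow, Eexp_zpow, Eexp_zpow]
  exact zpow_identity _ _ hu hv m n κ

noncomputable def fterm (coeff : ℕ → ℕ → ℂ) (κ : ℕ) (p : ℕ × ℕ) (φ1 φ2 : ℝ) : ℂ :=
  coeff p.1 p.2 *
    (2 * Eexp ((p.1:ℤ) + 1 - κ) φ1 * Eexp ((p.2:ℤ) + 1 - κ) φ2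
      - Eexp ((p.1:ℤ) + 2 - κ) φ1 * Eexp ((p.2:ℤ) - κ) φ2
      - Eexp ((p.1:ℤ) - κ) φ1 * Eexp ((p.2:ℤ) + 2 - κ) φ2)

noncomputable def gterm (coeff : ℕ → ℕ → ℂ) (κ : ℕ) (p : ℕ × ℕ) (φ1 : ℝ) : ℂ :=
  coeff p.1 p.2 *
    (2 * Eexp ((p.1:ℤ) + 1 - κ) φ1 * Jc ((p.2:ℤ) + 1 - κ)
      - Eexp ((p.1:ℤ) + 2 - κ) φ1 * Jc ((p.2:ℤ) - κ)
      - Eexp ((p.1:ℤ) - κ) φ1 * Jc ((p.2:ℤ) + 2 - κ))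

noncomputable def vval (coeff : ℕ → ℕ → ℂ) (κ : ℕ) (p : ℕ × ℕ) : ℂ :=
  coeff p.1 p.2 *
    (2 * Jc ((p.1:ℤ) + 1 - κ) * Jc ((p.2:ℤ) + 1 - κ)
      - Jc ((p.1:ℤ) + 2 - κ) * Jc ((p.2:ℤ) - κ)
      - Jc ((p.1:ℤ) - κ) * Jc ((p.2:ℤ) + 2 - κ))

lemma fterm_cont (coeff : ℕ → ℕ → ℂ) (κ : ℕ) (p : ℕ × ℕ) (φ1 : ℝ) :
    Continuous (fun φ2 => fterm coeff κ p φ1 φ2) := by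
  unfold fterm; fun_prop

lemma gterm_cont (coeff : ℕ → ℕ → ℂ) (κ : ℕ) (p : ℕ × ℕ) :
    Continuous (gterm coeff κ p) := by
  unfold gterm; fun_prop

lemma fterm_norm_le (coeff : ℕ → ℕ → ℂ) (κ : ℕ) (p : ℕ × ℕ) (φ1 φ2 : ℝ) :
    ‖fterm coeff κ p φ1 φ2‖ ≤ 4 * ‖coeff p.1 p.2‖ := by
  unfold fterm
  rw [norm_mul, mul_comm]
  gcongr
  calc ‖2 * Eexp ((p.1:ℤ) + 1 - κ) φ1 * Eexp ((p.2:ℤ) + 1 - κ) φ2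
      - Eexp ((p.1:ℤ) + 2 - κ) φ1 * Eexp ((p.2:ℤ) - κ) φ2
      - Eexp ((p.1:ℤ) - κ) φ1 * Eexp ((p.2:ℤ) + 2 - κ) φ2‖
      ≤ ‖2 * Eexp ((p.1:ℤ) + 1 - κ) φ1 * Eexp ((p.2:ℤ) + 1 - κ) φ2
      - Eexp ((p.1:ℤ) + 2 - κ) φ1 * Eexp ((p.2:ℤ) - κ) φ2‖
      + ‖Eexp ((p.1:ℤ) - κ) φ1 * Eexp ((p.2:ℤ) + 2 - κ) φ2‖ := norm_sub_le _ _
    _ ≤ (‖2 * Eexp ((p.1:ℤ) + 1 - κ) φ1 * Eexp ((p.2:ℤ) + 1 - κ) φ2‖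
      + ‖Eexp ((p.1:ℤ) + 2 - κ) φ1 * Eexp ((p.2:ℤ) - κ) φ2‖)
      + ‖Eexp ((p.1:ℤ) - κ) φ1 * Eexp ((p.2:ℤ) + 2 - κ) φ2‖ := by
        gcongr; exact norm_sub_le _ _
    _ ≤ 4 := by
        simp only [norm_mul, Eexp_norm, Complex.norm_ofNat, mul_one, one_mul]
        norm_num

lemma gterm_norm_le (coeff : ℕ → ℕ → ℂ) (κ : ℕ) (p : ℕ × ℕ) (φ1 : ℝ) :
    ‖gterm coeff κ p φ1‖ ≤ (8 * Real.pi) * ‖coeff p.1 p.2‖ := by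
  unfold gterm
  rw [norm_mul, mul_comm]
  gcongr
  calc ‖2 * Eexp ((p.1:ℤ) + 1 - κ) φ1 * Jc ((p.2:ℤ) + 1 - κ)
      - Eexp ((p.1:ℤ) + 2 - κ) φ1 * Jc ((p.2:ℤ) - κ)
      - Eexp ((p.1:ℤ) - κ) φ1 * Jc ((p.2:ℤ) + 2 - κ)‖
      ≤ (‖2 * Eexp ((p.1:ℤ) + 1 - κ) φ1 * Jc ((p.2:ℤ) + 1 - κ)‖
      + ‖Eexp ((p.1:ℤ) + 2 - κ) φ1 * Jc ((p.2:ℤ) - κ)‖)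
      + ‖Eexp ((p.1:ℤ) - κ) φ1 * Jc ((p.2:ℤ) + 2 - κ)‖ := by
        refine le_trans (norm_sub_le _ _) ?_
        gcongr; exact norm_sub_le _ _
    _ ≤ 8 * Real.pi := by
        have h1 := Jc_norm ((p.2:ℤ) + 1 - κ)
        have h2 := Jc_norm ((p.2:ℤ) - κ)
        have h3 := Jc_norm ((p.2:ℤ) + 2 - κ)
        simp only [norm_mul, Eexp_norm, Complex.norm_ofNat, mul_one, one_mul]
        nlinarith [Real.pi_pos]

lemma interchange (f : ℕ × ℕ → ℝ → ℂ) (B : ℕ × ℕ → ℝ)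
    (hcont : ∀ p, Continuous (f p)) (hB : ∀ p φ, ‖f p φ‖ ≤ B p) (hBs : Summable B) :
    (∫ φ in (0:ℝ)..(2*Real.pi), ∑' p, f p φ) = ∑' p, ∫ φ in (0:ℝ)..(2*Real.pi), f p φ := by
  have hπ : (0:ℝ) ≤ 2*Real.pi := by positivity
  have hBnn : ∀ p, 0 ≤ B p := fun p => le_trans (norm_nonneg _) (hB p 0)
  have hfin : volume (Set.Ioc (0:ℝ) (2*Real.pi)) < ⊤ := measure_Ioc_lt_top
  have hvol : (volume (Set.Ioc (0:ℝ) (2*Real.pi))).toReal = 2*Real.pi := by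
    rw [Real.volume_Ioc, sub_zero, ENNReal.toReal_ofReal hπ]
  have hint : ∀ p, Integrable (f p) (volume.restrict (Set.Ioc (0:ℝ) (2*Real.pi))) :=
    fun p => (hcont p).integrableOn_Ioc
  have hsumint : Summable fun p => ∫ φ, ‖f p φ‖ ∂(volume.restrict (Set.Ioc (0:ℝ) (2*Real.pi))) := by
    apply Summable.of_nonneg_of_le (fun p => integral_nonneg fun φ => norm_nonneg _)
      (fun p => ?_) (hBs.mul_right (2*Real.pi))
    calc (∫ φ, ‖f p φ‖ ∂(volume.restrict (Set.Ioc (0:ℝ) (2*Real.pi))))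
        ≤ ∫ _, B p ∂(volume.restrict (Set.Ioc (0:ℝ) (2*Real.pi))) := by
          apply integral_mono (hint p).norm (integrable_const _) (fun φ => hB p φ)
      _ = B p * (2*Real.pi) := by
          rw [MeasureTheory.integral_const, measureReal_restrict_apply_univ, measureReal_def, hvol, smul_eq_mul,
            mul_comm]
  rw [intervalIntegral.integral_of_le hπ]
  simp only [intervalIntegral.integral_of_le hπ]
  exact (MeasureTheory.integral_tsum_of_summable_integral_norm hint hsumint).symm



lemma integral_comb (c w1 w2 w3 : ℂ) (b1 b2 b3 : ℤ) :
    (∫ φ2 in (0:ℝ)..(2*Real.pi),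
        c * (2 * w1 * Eexp b1 φ2 - w2 * Eexp b2 φ2 - w3 * Eexp b3 φ2))
      = c * (2 * w1 * Jc b1 - w2 * Jc b2 - w3 * Jc b3) := by
  have s1 : IntervalIntegrable (fun φ2 => 2 * w1 * Eexp b1 φ2) volume 0 (2*Real.pi) :=
    (continuous_const.mul (Eexp_cont b1)).intervalIntegrable _ _
  have s2 : IntervalIntegrable (fun φ2 => w2 * Eexp b2 φ2) volume 0 (2*Real.pi) :=
    (continuous_const.mul (Eexp_cont b2)).intervalIntegrable _ _
  have s3 : IntervalIntegrable (fun φ2 => w3 * Eexp b3 φ2) volume 0 (2*Real.pi) :=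
    (continuous_const.mul (Eexp_cont b3)).intervalIntegrable _ _
  rw [intervalIntegral.integral_const_mul]
  rw [intervalIntegral.integral_sub (s1.sub s2) s3, intervalIntegral.integral_sub s1 s2,
    intervalIntegral.integral_const_mul, intervalIntegral.integral_const_mul,
    intervalIntegral.integral_const_mul, Eexp_integral, Eexp_integral, Eexp_integral]

lemma integral_comb' (c u1 u2 u3 : ℂ) (a1 a2 a3 : ℤ) :
    (∫ φ1 in (0:ℝ)..(2*Real.pi),
        c * (2 * Eexp a1 φ1 * u1 - Eexp a2 φ1 * u2 - Eexp a3 φ1 * u3))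
      = c * (2 * Jc a1 * u1 - Jc a2 * u2 - Jc a3 * u3) := by
  have s1 : IntervalIntegrable (fun φ1 => 2 * Eexp a1 φ1 * u1) volume 0 (2*Real.pi) :=
    ((continuous_const.mul (Eexp_cont a1)).mul continuous_const).intervalIntegrable _ _
  have s2 : IntervalIntegrable (fun φ1 => Eexp a2 φ1 * u2) volume 0 (2*Real.pi) :=
    ((Eexp_cont a2).mul continuous_const).intervalIntegrable _ _
  have s3 : IntervalIntegrable (fun φ1 => Eexp a3 φ1 * u3) volume 0 (2*Real.pi) :=
    ((Eexp_cont a3).mul continuous_const).intervalIntegrable _ _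
  rw [intervalIntegral.integral_const_mul]
  rw [intervalIntegral.integral_sub (s1.sub s2) s3, intervalIntegral.integral_sub s1 s2,
    intervalIntegral.integral_mul_const, intervalIntegral.integral_mul_const,
    intervalIntegral.integral_mul_const, intervalIntegral.integral_const_mul,
    Eexp_integral, Eexp_integral, Eexp_integral]

lemma integral_fterm (coeff : ℕ → ℕ → ℂ) (κ : ℕ) (p : ℕ × ℕ) (φ1 : ℝ) :
    (∫ φ2 in (0:ℝ)..(2*Real.pi), fterm coeff κ p φ1 φ2) = gterm coeff κ p φ1 :=
  integral_comb _ _ _ _ _ _ _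

lemma integral_gterm (coeff : ℕ → ℕ → ℂ) (κ : ℕ) (p : ℕ × ℕ) :
    (∫ φ1 in (0:ℝ)..(2*Real.pi), gterm coeff κ p φ1) = vval coeff κ p :=
  integral_comb' _ _ _ _ _ _ _


lemma hasSum_fterm (F : ℂ → ℂ → ℂ) (coeff : ℕ → ℕ → ℂ)
    (hsum : ∀ z1 z2 : ℂ,
      HasSum (fun p : ℕ × ℕ => coeff p.1 p.2 * z1 ^ p.1 * z2 ^ p.2) (F z1 z2))
    (κ : ℕ) (φ1 φ2 : ℝ) :
    HasSum (fun p => fterm coeff κ p φ1 φ2)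
      (F (Complex.exp (Complex.I * φ1)) (Complex.exp (Complex.I * φ2)) *
        (Complex.exp (Complex.I * φ1) - Complex.exp (Complex.I * φ2)) *
        (Complex.exp (-Complex.I * φ1) - Complex.exp (-Complex.I * φ2)) *
        Complex.exp (Complex.I * (1 - (κ : ℂ)) * ((φ1 : ℂ) + (φ2 : ℂ)))) := by
  have h := (hsum (Complex.exp (Complex.I * φ1)) (Complex.exp (Complex.I * φ2))).mul_right
    ((Complex.exp (Complex.I * φ1) - Complex.exp (Complex.I * φ2)) *
      ((Complex.exp (-Complex.I * φ1) - Complex.exp (-Complex.I * φ2)) *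
        Complex.exp (Complex.I * (1 - (κ : ℂ)) * ((φ1 : ℂ) + (φ2 : ℂ)))))
  have hfun : (fun p : ℕ × ℕ => coeff p.1 p.2 * Complex.exp (Complex.I * φ1) ^ p.1 *
      Complex.exp (Complex.I * φ2) ^ p.2 *
      ((Complex.exp (Complex.I * φ1) - Complex.exp (Complex.I * φ2)) *
        ((Complex.exp (-Complex.I * φ1) - Complex.exp (-Complex.I * φ2)) *
          Complex.exp (Complex.I * (1 - (κ : ℂ)) * ((φ1 : ℂ) + (φ2 : ℂ))))))
      = fun p => fterm coeff κ p φ1 φ2 := by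
    funext p
    unfold fterm
    rw [← pointwise_expand p.1 p.2 κ φ1 φ2]
    ring
  rw [hfun] at h
  convert h using 1
  · rfl
  ring

theorem residue_identity_d2 (F : ℂ → ℂ → ℂ) (coeff : ℕ → ℕ → ℂ)
    (hsym : ∀ m n, coeff m n = coeff n m)
    (hsum : ∀ z1 z2 : ℂ,
      HasSum (fun p : ℕ × ℕ => coeff p.1 p.2 * z1 ^ p.1 * z2 ^ p.2) (F z1 z2))
    (a c : ℕ) (hac : c ≤ a) (κ : ℕ) (hκ : κ = a - c + 2) :
    (∫ φ1 in (0:ℝ)..(2 * Real.pi), ∫ φ2 in (0:ℝ)..(2 * Real.pi),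
        F (Complex.exp (Complex.I * φ1)) (Complex.exp (Complex.I * φ2)) *
          (Complex.exp (Complex.I * φ1) - Complex.exp (Complex.I * φ2)) *
          (Complex.exp (-Complex.I * φ1) - Complex.exp (-Complex.I * φ2)) *
          Complex.exp (Complex.I * (1 - (κ : ℂ)) * ((φ1 : ℂ) + (φ2 : ℂ)))) /
        ((2 * Real.pi : ℝ) : ℂ) ^ 2 =
      2 * (coeff (κ - 1) (κ - 1) - coeff κ (κ - 2)) := by
  have hκ2 : 2 ≤ κ := by omega
  have hsc : Summable (fun p : ℕ × ℕ => ‖coeff p.1 p.2‖) := by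
    have h := (hsum 1 1).summable
    simp only [one_pow, mul_one] at h
    exact summable_norm_iff.mpr h
  have hrepr : ∀ φ1 φ2 : ℝ,
      F (Complex.exp (Complex.I * φ1)) (Complex.exp (Complex.I * φ2)) *
        (Complex.exp (Complex.I * φ1) - Complex.exp (Complex.I * φ2)) *
        (Complex.exp (-Complex.I * φ1) - Complex.exp (-Complex.I * φ2)) *
        Complex.exp (Complex.I * (1 - (κ : ℂ)) * ((φ1 : ℂ) + (φ2 : ℂ)))
        = ∑' p, fterm coeff κ p φ1 φ2 :=
    fun φ1 φ2 => (hasSum_fterm F coeff hsum κ φ1 φ2).tsum_eq.symm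
  simp only [hrepr]
  have inner : ∀ φ1 : ℝ,
      (∫ φ2 in (0:ℝ)..(2*Real.pi), ∑' p, fterm coeff κ p φ1 φ2)
        = ∑' p, gterm coeff κ p φ1 := by
    intro φ1
    rw [interchange (fun p φ2 => fterm coeff κ p φ1 φ2) (fun p => 4 * ‖coeff p.1 p.2‖)
      (fun p => fterm_cont coeff κ p φ1) (fun p φ2 => fterm_norm_le coeff κ p φ1 φ2)
      (hsc.mul_left 4)]
    exact tsum_congr fun p => integral_fterm coeff κ p φ1
  simp only [inner]
  rw [interchange (gterm coeff κ) (fun p => (8 * Real.pi) * ‖coeff p.1 p.2‖)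
    (gterm_cont coeff κ) (gterm_norm_le coeff κ) (hsc.mul_left _)]
  simp only [integral_gterm]
  have hval : (∑' p, vval coeff κ p)
      = (2 * (Real.pi:ℂ))^2 * (2 * coeff (κ-1) (κ-1) - coeff (κ-2) κ - coeff κ (κ-2)) := by
    have hzero : ∀ p ∉ ({(κ-1,κ-1),(κ-2,κ),(κ,κ-2)} : Finset (ℕ × ℕ)),
        vval coeff κ p = 0 := by
      rintro ⟨m, n⟩ hp
      have h1 : ¬(m = κ-1 ∧ n = κ-1) := by
        rintro ⟨rfl, rfl⟩; exact hp (by simp)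
      have h2 : ¬(m = κ-2 ∧ n = κ) := by
        rintro ⟨rfl, rfl⟩; exact hp (by simp)
      have h3 : ¬(m = κ ∧ n = κ-2) := by
        rintro ⟨rfl, rfl⟩; exact hp (by simp)
      have z1 : Jc ((m:ℤ)+1-κ) * Jc ((n:ℤ)+1-κ) = 0 := by
        unfold Jc
        by_cases e1 : (m:ℤ)+1-κ = 0
        · by_cases e2 : (n:ℤ)+1-κ = 0
          · exact absurd ⟨by omega, by omega⟩ h1
          · simp [e2]
        · simp [e1]
      have z2 : Jc ((m:ℤ)+2-κ) * Jc ((n:ℤ)-κ) = 0 := by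
        unfold Jc
        by_cases e1 : (m:ℤ)+2-κ = 0
        · by_cases e2 : (n:ℤ)-κ = 0
          · exact absurd ⟨by omega, by omega⟩ h2
          · simp [e2]
        · simp [e1]
      have z3 : Jc ((m:ℤ)-κ) * Jc ((n:ℤ)+2-κ) = 0 := by
        unfold Jc
        by_cases e1 : (m:ℤ)-κ = 0
        · by_cases e2 : (n:ℤ)+2-κ = 0
          · exact absurd ⟨by omega, by omega⟩ h3
          · simp [e2]
        · simp [e1]
      unfold vval
      simp only
      rw [mul_assoc 2, z1, z2, z3]
      ring
    rw [tsum_eq_sum hzero]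
    have d1 : ((κ-1,κ-1) : ℕ × ℕ) ∉ ({(κ-2,κ),(κ,κ-2)} : Finset (ℕ × ℕ)) := by
      simp [Prod.ext_iff]; omega
    have d2 : ((κ-2,κ) : ℕ × ℕ) ∉ ({(κ,κ-2)} : Finset (ℕ × ℕ)) := by
      simp [Prod.ext_iff]; omega
    rw [show ({(κ-1,κ-1),(κ-2,κ),(κ,κ-2)} : Finset (ℕ × ℕ))
        = insert (κ-1,κ-1) (insert (κ-2,κ) {(κ,κ-2)}) from rfl,
      Finset.sum_insert d1, Finset.sum_insert d2, Finset.sum_singleton]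
    have v1 : vval coeff κ (κ-1,κ-1)
        = coeff (κ-1) (κ-1) * (2 * (2*(Real.pi:ℂ)) * (2*(Real.pi:ℂ))) := by
      have e1 : (((κ-1:ℕ)):ℤ)+1-κ = 0 := by omega
      have e2 : ¬((((κ-1:ℕ)):ℤ)+2-κ = 0) := by omega
      have e3 : ¬((((κ-1:ℕ)):ℤ)-κ = 0) := by omega
      simp [vval, Jc, e1, e2, e3]
    have v2 : vval coeff κ (κ-2,κ)
        = -(coeff (κ-2) κ * ((2*(Real.pi:ℂ)) * (2*(Real.pi:ℂ)))) := by
      have e1 : ¬((((κ-2:ℕ)):ℤ)+1-κ = 0) := by omega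
      have e2 : (((κ-2:ℕ)):ℤ)+2-κ = 0 := by omega
      have e2' : ((κ:ℕ):ℤ)-κ = 0 := by omega
      have e3 : ¬((((κ-2:ℕ)):ℤ)-κ = 0) := by omega
      simp [vval, Jc, e1, e2, e2', e3]
    have v3 : vval coeff κ (κ,κ-2)
        = -(coeff κ (κ-2) * ((2*(Real.pi:ℂ)) * (2*(Real.pi:ℂ)))) := by
      have e1 : ¬(((κ:ℕ):ℤ)+1-κ = 0) := by omega
      have e2 : ¬(((κ:ℕ):ℤ)+2-κ = 0) := by omega
      have e3 : ((κ:ℕ):ℤ)-κ = 0 := by omega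
      have e3' : (((κ-2:ℕ)):ℤ)+2-κ = 0 := by omega
      have e4 : ¬((((κ-2:ℕ)):ℤ)+1-κ = 0) := by omega
      have e5 : ¬((((κ-2:ℕ)):ℤ)-κ = 0) := by omega
      simp [vval, Jc, e1, e2, e3, e3', e4, e5]
    rw [v1, v2, v3]
    ring
  have hT : ((2 * Real.pi : ℝ) : ℂ) = 2 * (Real.pi:ℂ) := by push_cast; ring
  rw [hval, hT, hsym (κ-2) κ]
  have hne : (2 * (Real.pi:ℂ)) ≠ 0 := by
    simp [Real.pi_ne_zero]
  rw [div_eq_iff (pow_ne_zero 2 hne)]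
  ring
end
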